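/- The convex cone generated by {d_1,…,d_J} equals the hyperplane H = {x ∈ ℝ^J : Σ_{i∈I} x_i = 0}, and the convex cone generated by {d_1,…,d_J, d_{J+1}} equals the closed half-space {x ∈ ℝ^J : Σ_{i∈I} x_i ≥ 0}. -/

import Mathlib

/-!
Since `(1 - β i) • d i = e i - β`, the directions `d i` span the hyperplane `H` with
nonnegative coefficients: a vector `x ∈ H` equals `∑ k, c k • (e k - β)` for `c = x + t • β`,
and `c ≥ 0` once `t` is large. Adding `d (J+1)`, whose coordinate sum is positive, sweeps `H`
into the closed half-space.
-/

open Finset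

section Cone

variable {ι E : Type*} [Fintype ι] [AddCommGroup E] [Module ℝ E]

def nonnegCombinations (v : ι → E) : Set E :=
  {x | ∃ θ : ι → ℝ, (∀ k, 0 ≤ θ k) ∧ x = ∑ k, θ k • v k}

theorem nonnegCombinations_add_ray_eq_halfspace {v : ι → E} {w : E} (f : E →ₗ[ℝ] ℝ)
    (hv : nonnegCombinations v = {x | f x = 0}) (hw : 0 < f w) :
    {x | ∃ θ : ι → ℝ, ∃ t : ℝ, (∀ k, 0 ≤ θ k) ∧ 0 ≤ t ∧ x = (∑ k, θ k • v k) + t • w}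
      = {x | 0 ≤ f x} := by
  ext x
  constructor
  · rintro ⟨θ, t, hθ, ht, rfl⟩
    have hf : f (∑ k, θ k • v k) = 0 := hv.subset ⟨θ, hθ, rfl⟩
    simpa [hf] using mul_nonneg ht hw.le
  · intro hx
    set t := f x / f w
    have hrest : x - t • w ∈ nonnegCombinations v := by
      rw [hv]
      simp [t, hw.ne']
    obtain ⟨θ, hθ, hθx⟩ := hrest
    exact ⟨θ, t, hθ, div_nonneg hx hw.le, by rw [← hθx, sub_add_cancel]⟩

end Cone

def coordSum (ι : Type*) [Fintype ι] : (ι → ℝ) →ₗ[ℝ] ℝ where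
  toFun x := ∑ i, x i
  map_add' _ _ := sum_add_distrib
  map_smul' _ _ := by simp [mul_sum]

section GPS

variable {ι : Type*} [DecidableEq ι] {β : ι → ℝ}

noncomputable def gpsDirection (β : ι → ℝ) (i : ι) : ι → ℝ :=
  fun j => if j = i then 1 else -β j / (1 - β i)

theorem gpsDirection_eq_smul {i : ι} (hβi : β i ≠ 1) :
    gpsDirection β i = (1 - β i)⁻¹ • (Pi.single i 1 - β) := by
  have : 1 - β i ≠ 0 := sub_ne_zero.mpr hβi.symm
  ext j
  by_cases hji : j = i
  · subst hji
    simp [gpsDirection, this]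
  · simp [gpsDirection, hji, div_eq_inv_mul]

variable [Fintype ι]

theorem coordSum_gpsDirection (hβsum : ∑ i, β i = 1) {i : ι} (hβi : β i ≠ 1) :
    coordSum ι (gpsDirection β i) = 0 := by
  rw [gpsDirection_eq_smul hβi, map_smul, map_sub]
  simp [coordSum, hβsum]

theorem sum_smul_single_sub (β c : ι → ℝ) :
    ∑ k, c k • (Pi.single k 1 - β) = c - (∑ k, c k) • β := by
  ext j
  simp [mul_sub, sum_sub_distrib, Pi.single_apply, sum_mul]

theorem nonnegCombinations_gpsDirection (hβ0 : ∀ i, 0 < β i) (hβ1 : ∀ i, β i < 1)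
    (hβsum : ∑ i, β i = 1) :
    nonnegCombinations (gpsDirection β) = {x | coordSum ι x = 0} := by
  ext x
  constructor
  · rintro ⟨θ, -, rfl⟩
    simp [map_sum, coordSum_gpsDirection hβsum (hβ1 _).ne]
  · intro hx
    obtain ⟨t, ht⟩ := (Set.finite_range fun k => -x k / β k).bddAbove
    have hc : ∀ k, 0 ≤ x k + β k * t := fun k => by
      have := (div_le_iff₀' (hβ0 k)).mp (ht ⟨k, rfl⟩)
      linarith
    refine ⟨fun k => (1 - β k) * (x k + β k * t),
      fun k => mul_nonneg (sub_nonneg.mpr (hβ1 k).le) (hc k), ?_⟩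
    have hsum : ∑ k, (x k + β k * t) = t := by
      rw [sum_add_distrib, ← sum_mul, hβsum]
      simpa [coordSum] using hx
    calc x = (x + t • β) - t • β := by abel
      _ = ∑ k, (x k + β k * t) • (Pi.single k 1 - β) := by
        rw [sum_smul_single_sub, hsum]
        congr 1
        ext k
        simp [mul_comm]
      _ = ∑ k, ((1 - β k) * (x k + β k * t)) • gpsDirection β k := by
        refine sum_congr rfl fun k _ => ?_
        have : 1 - β k ≠ 0 := (sub_pos.mpr (hβ1 k)).ne'
        rw [gpsDirection_eq_smul (hβ1 k).ne, smul_smul]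
        field_simp

end GPS

theorem gps_cones_eq_hyperplane_and_halfspace_general
    (J : ℕ) (β : Fin J → ℝ)
    (hβ : ∀ i, 0 < β i ∧ β i < 1) (hβsum : ∑ i, β i = 1)
    (d : Fin J → Fin J → ℝ)
    (hd : ∀ i j, d i j = if j = i then 1 else -(β j) / (1 - β i))
    (dlast : Fin J → ℝ) (hdlast : ∀ i, dlast i = (Real.sqrt J)⁻¹) :
    {x : Fin J → ℝ | ∃ θ : Fin J → ℝ, (∀ k, 0 ≤ θ k) ∧ x = ∑ k, θ k • d k}
        = {x : Fin J → ℝ | ∑ i, x i = 0} ∧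
    {x : Fin J → ℝ | ∃ θ : Fin J → ℝ, ∃ t : ℝ, (∀ k, 0 ≤ θ k) ∧ 0 ≤ t ∧
        x = (∑ k, θ k • d k) + t • dlast}
        = {x : Fin J → ℝ | 0 ≤ ∑ i, x i} := by
  obtain rfl : d = gpsDirection β := funext fun i => funext (hd i)
  have hcone := nonnegCombinations_gpsDirection (fun i => (hβ i).1) (fun i => (hβ i).2) hβsum
  have hJ : (0 : ℝ) < J := Nat.cast_pos.mpr <| Nat.pos_of_ne_zero <| by
    rintro rfl
    simp at hβsum
  have hdlast : 0 < coordSum (Fin J) dlast := by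
    simp only [coordSum, LinearMap.coe_mk, AddHom.coe_mk, hdlast, sum_const, card_univ,
      Fintype.card_fin, nsmul_eq_mul]
    positivity
  exact ⟨hcone, nonnegCombinations_add_ray_eq_halfspace (coordSum (Fin J)) hcone hdlast⟩

/-- the convex cone generated by `{d_1,…,d_J}` (i.e. the set of nonnegative
linear combinations) equals the hyperplane `H = {x : Σ_i x_i = 0}`, and the convex cone
generated by `{d_1,…,d_J, d_{J+1}}` equals the half-space `{x : Σ_i x_i ≥ 0}`. -/
theorem gps_cones_eq_hyperplane_and_halfspace
    (J : ℕ) (hJ : 2 ≤ J) (β : Fin J → ℝ)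
    (hβ : ∀ i, 0 < β i ∧ β i < 1) (hβsum : ∑ i, β i = 1)
    (d : Fin J → Fin J → ℝ)
    (hd : ∀ i j, d i j = if j = i then 1 else -(β j) / (1 - β i))
    (dlast : Fin J → ℝ) (hdlast : ∀ i, dlast i = (Real.sqrt J)⁻¹) :
    {x : Fin J → ℝ | ∃ θ : Fin J → ℝ, (∀ k, 0 ≤ θ k) ∧ x = ∑ k, θ k • d k}
        = {x : Fin J → ℝ | ∑ i, x i = 0} ∧
    {x : Fin J → ℝ | ∃ θ : Fin J → ℝ, ∃ t : ℝ, (∀ k, 0 ≤ θ k) ∧ 0 ≤ t ∧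
        x = (∑ k, θ k • d k) + t • dlast}
        = {x : Fin J → ℝ | 0 ≤ ∑ i, x i} :=
  gps_cones_eq_hyperplane_and_halfspace_general J β hβ hβsum d hd dlast hdlast
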